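/- arXiv:0907.4045 — 4 statements merged into one kernel-verified Lean document; each statement's English description precedes it below -/
import Mathlib

section
/- Let C_1, …, C_r be nonzero monomial ideals in ℂ[x_1,…,x_n] and for each p ≥ 1 set I_p = C_1^p ∩ … ∩ C_r^p (a graded system of monomial ideals). Then ⋃_{p≥1} (1/p)·Newt(I_p) = Newt(C_1) ∩ … ∩ Newt(C_r). -/
open Ideal MvPolynomial Pointwise

namespace ELS

/-- Contraction of the localized ideal `J·R_S` under `R → R_S` (the `S`-saturation of `J`). -/
noncomputable def satIdeal {R : Type*} [CommRing R] (S : Submonoid R) (J : Ideal R) : Ideal R :=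
  (J.map (algebraMap R (Localization S))).comap (algebraMap R (Localization S))

/-- The complement of a prime ideal, as a submonoid. -/
def primeComplSub {R : Type*} [CommRing R] (P : Ideal R) (hP : P.IsPrime) : Submonoid R :=
  haveI := hP
  P.primeCompl

/-- The symbolic power of a prime ideal: contraction of `P^p R_P` under `R → R_P`. -/
noncomputable def primeSymbolicPower {R : Type*} [CommRing R] (P : Ideal R) (hP : P.IsPrime)
    (p : ℕ) : Ideal R :=
  satIdeal (primeComplSub P hP) (P ^ p)

/-- The multiplicative set of elements lying outside every minimal prime of `I`. -/
def outMinPrimes {R : Type*} [CommRing R] (I : Ideal R) : Submonoid R where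
  carrier := {s | ∀ Q ∈ I.minimalPrimes, s ∉ Q}
  one_mem' := by
    intro Q hQ h1
    exact hQ.1.1.ne_top ((Ideal.eq_top_iff_one Q).mpr h1)
  mul_mem' := by
    intro a b ha hb Q hQ hab
    rcases hQ.1.1.mem_or_mem hab with h | h
    · exact ha Q hQ h
    · exact hb Q hQ h

/-- The symbolic power of an ideal: contraction of `I^p` localized at the complement of the
union of the minimal primes of `I`. -/
noncomputable def symbolicPower {R : Type*} [CommRing R] (I : Ideal R) (p : ℕ) : Ideal R :=
  satIdeal (outMinPrimes I) (I ^ p)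

/-- A monomial ideal: with every polynomial it contains all monomials in its support. -/
def IsMonomialIdeal {n : ℕ} (a : Ideal (MvPolynomial (Fin n) ℂ)) : Prop :=
  ∀ f ∈ a, ∀ v ∈ f.support, (monomial v (1 : ℂ)) ∈ a

/-- The set of exponent vectors of monomials in `a`, viewed inside `ℝ^n`. -/
def monomSet {n : ℕ} (a : Ideal (MvPolynomial (Fin n) ℂ)) : Set (Fin n → ℝ) :=
  {x | ∃ v : Fin n →₀ ℕ, (monomial v (1 : ℂ)) ∈ a ∧ x = fun i => (v i : ℝ)}

/-- The Newton polyhedron of a monomial ideal: the convex hull in `ℝ^n` of the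
exponent vectors of the monomials in `a`. -/
def newt {n : ℕ} (a : Ideal (MvPolynomial (Fin n) ℂ)) : Set (Fin n → ℝ) :=
  convexHull ℝ (monomSet a)

/-- The least total degree of a nonzero polynomial in `J`: the multiplicity at the origin. -/
noncomputable def mult0 {n : ℕ} (J : Ideal (MvPolynomial (Fin n) ℂ)) : ℕ :=
  sInf {d | ∃ f ∈ J, f ≠ 0 ∧ f.totalDegree = d}

end ELS

/-!
If `C` is a monomial ideal, every exponent of `C ^ p` is a sum of `p` exponents of `C`, so
`Newt(C ^ p) ⊆ p • Newt(C)`, which puts the union inside the intersection.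

Conversely, `I_p I_q ⊆ I_{p+q}` makes `⋃ p, p⁻¹ • Newt(I_p)` convex, so it suffices to write a
point `x` of `⋂ i, Newt(C_i)` as a real convex combination of points `y` that are, for every `i`,
convex combinations of exponents of `C_i` with *rational* weights: clearing denominators then
puts `p • y` among the exponents of `I_p`. Such a decomposition exists because the set of all
`(y, weights)` is cut out by rational linear inequalities, and every point `x` of a rational
polyhedron is a convex combination of its rational points: either some constraint with a nonzero
linear part is tight at `x`, and solving it for one coordinate is a rational affine
parametrization of a polyhedron of lower dimension through `x`, or the polyhedron is a
neighbourhood of `x` and contains a small box around `x` with rational vertices.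
-/

open Set Filter Topology

section PolyhedronOver

variable (K : Subfield ℝ)

def pointsOver (ι : Type*) : Set (ι → ℝ) := univ.pi fun _ => (K : Set ℝ)

variable {K} {ι : Type*}

theorem mem_convexHull_inter_pointsOver_of_mem_nhds [Fintype ι] {s : Set (ι → ℝ)} {x : ι → ℝ}
    (hs : s ∈ 𝓝 x) : x ∈ convexHull ℝ (s ∩ pointsOver K ι) := by
  obtain ⟨δ, hδ, hball⟩ := Metric.mem_nhds_iff.1 hs
  choose a ha using fun i => exists_rat_btwn (show x i - δ < x i by linarith)
  choose b hb using fun i => exists_rat_btwn (show x i < x i + δ by linarith)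
  have hbox : univ.pi (fun i => ({(a i : ℝ), (b i : ℝ)} : Set ℝ)) ⊆ s ∩ pointsOver K ι := by
    intro y hy
    have hy' : ∀ i, y i = a i ∨ y i = b i := fun i => hy i trivial
    refine ⟨hball ?_, fun i _ => ?_⟩
    · rw [ball_pi x hδ]
      intro i _
      dsimp only
      rw [Real.ball_eq_Ioo]
      rcases hy' i with h | h <;> rw [h] <;> constructor <;> linarith [ha i, hb i]
    · rcases hy' i with h | h <;> rw [h] <;> exact SubfieldClass.ratCast_mem K _
  refine convexHull_mono hbox ?_
  rw [convexHull_pi]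
  intro i _
  dsimp only
  rw [convexHull_pair, segment_eq_Icc (by linarith [ha i, hb i])]
  exact ⟨(ha i).2.le, (hb i).1.le⟩

theorem linear_single_one_mem_of_mapsTo [DecidableEq ι] {f : (ι → ℝ) →ᵃ[ℝ] ℝ}
    (hf : MapsTo f (pointsOver K ι) K) (i₀ : ι) : f.linear (Pi.single i₀ 1) ∈ K := by
  have := f.linearMap_vsub (Pi.single i₀ 1) 0
  rw [vsub_eq_sub, vsub_eq_sub, sub_zero] at this
  rw [this]
  refine sub_mem (hf fun i _ => ?_) (hf fun i _ => zero_mem K)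
  rcases eq_or_ne i i₀ with rfl | h
  · simp [one_mem]
  · simp [h, zero_mem]

theorem exists_affineMap_mapsTo_pointsOver_restrict_eq [DecidableEq ι] {f : (ι → ℝ) →ᵃ[ℝ] ℝ}
    (hf : MapsTo f (pointsOver K ι) K) {i₀ : ι} (hi₀ : f.linear (Pi.single i₀ 1) ≠ 0) :
    ∃ φ : ({i // i ≠ i₀} → ℝ) →ᵃ[ℝ] (ι → ℝ), MapsTo φ (pointsOver K _) (pointsOver K ι) ∧
      ∀ x, f x = 0 → φ (fun i => x i) = x := by
  set a := f.linear (Pi.single i₀ 1)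
  have haK : a ∈ K := linear_single_one_mem_of_mapsTo hf i₀
  let E := (Function.ExtendByZero.linearMap ℝ (Subtype.val : {i // i ≠ i₀} → ι)).toAffineMap
  have hE : ∀ z j (hj : j ≠ i₀), E z j = z ⟨j, hj⟩ := fun z j hj =>
    Subtype.val_injective.extend_apply z 0 ⟨j, hj⟩
  refine ⟨AffineMap.pi fun i => if h : i = i₀ then (-a⁻¹) • f.comp E
    else (LinearMap.proj (⟨i, h⟩ : {i // i ≠ i₀})).toAffineMap, ?_, ?_⟩
  · intro z hz i _
    have hEz : E z ∈ pointsOver K ι := by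
      intro j _
      by_cases hj : j = i₀
      · simp [E, hj, Function.extend_apply', zero_mem]
      · simpa [hE z j hj] using hz ⟨j, hj⟩ trivial
    by_cases hi : i = i₀
    · simpa [hi] using mul_mem (neg_mem (inv_mem haK)) (hf hEz)
    · simpa [hi] using hz ⟨i, hi⟩ trivial
  · intro x hx
    have hEx : E (fun i => x i) = x + (-x i₀) • Pi.single i₀ 1 := by
      ext j
      by_cases hj : j = i₀
      · simp [E, hj, Function.extend_apply']
      · simp [hE _ j hj, hj]
    have hfE : f (E (fun i => x i)) = -x i₀ * a := by
      have := f.linearMap_vsub (E fun i => x i) x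
      rw [vsub_eq_sub, vsub_eq_sub, hEx, add_sub_cancel_left, map_smul, hx, sub_zero] at this
      rw [hEx, ← this, smul_eq_mul]
    ext i
    by_cases hi : i = i₀
    · subst hi
      simp [hfE]
      field_simp
    · simp [hi]

theorem mem_convexHull_inter_pointsOver_of_forall_le_zero [Fintype ι] {κ : Type*} [Finite κ]
    (f : κ → (ι → ℝ) →ᵃ[ℝ] ℝ) (hf : ∀ k, MapsTo (f k) (pointsOver K ι) K) {x : ι → ℝ}
    (hx : ∀ k, f k x ≤ 0) : x ∈ convexHull ℝ ({y | ∀ k, f k y ≤ 0} ∩ pointsOver K ι) := by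
  classical
  induction h : Fintype.card ι generalizing ι with
  | zero =>
    have := Fintype.card_eq_zero_iff.1 h
    exact subset_convexHull ℝ _ ⟨hx, fun i => isEmptyElim i⟩
  | succ n ih =>
    by_cases htight : ∃ k i, f k x = 0 ∧ (f k).linear (Pi.single i 1) ≠ 0
    · obtain ⟨k, i₀, hk, hi₀⟩ := htight
      obtain ⟨φ, hφK, hφx⟩ := exists_affineMap_mapsTo_pointsOver_restrict_eq (hf k) hi₀
      have hz := ih (fun l => (f l).comp φ) (fun l => (hf l).comp hφK)
        (x := fun i => x i) (by simpa [hφx x hk] using hx)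
        (by rw [Fintype.card_subtype_compl, Fintype.card_subtype_eq, h, Nat.add_sub_cancel])
      rw [← hφx x hk]
      refine (convexHull_mono ?_) (φ.image_convexHull _ ▸ mem_image_of_mem φ hz)
      rintro _ ⟨z, ⟨hz, hzK⟩, rfl⟩
      exact ⟨hz, hφK hzK⟩
    · push Not at htight
      refine mem_convexHull_inter_pointsOver_of_mem_nhds (Filter.eventually_all.2 fun k => ?_)
      rcases (hx k).lt_or_eq with hlt | heq
      · exact ((AffineMap.continuous_linear_iff.1
          (f k).linear.continuous_of_finiteDimensional).tendsto x).eventually (gt_mem_nhds hlt)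
          |>.mono fun _ => le_of_lt
      · have hlin : (f k).linear = 0 := by
          ext i
          exact htight k i heq
        refine Filter.Eventually.of_forall fun y => ?_
        have := (f k).linearMap_vsub y x
        rw [hlin, LinearMap.zero_apply, vsub_eq_sub, eq_comm, sub_eq_zero] at this
        exact this ▸ hx k

variable (K) in
def IsPolyhedronOver (s : Set (ι → ℝ)) : Prop :=
  ∃ (κ : Type) (_ : Finite κ) (f : κ → (ι → ℝ) →ᵃ[ℝ] ℝ),
    (∀ k, MapsTo (f k) (pointsOver K ι) K) ∧ s = {x | ∀ k, f k x ≤ 0}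

namespace IsPolyhedronOver

variable {s t : Set (ι → ℝ)}

theorem subset_convexHull_inter_pointsOver [Fintype ι] (hs : IsPolyhedronOver K s) :
    s ⊆ convexHull ℝ (s ∩ pointsOver K ι) := by
  obtain ⟨κ, _, f, hf, rfl⟩ := hs
  exact fun x hx => mem_convexHull_inter_pointsOver_of_forall_le_zero f hf hx

theorem inter (hs : IsPolyhedronOver K s) (ht : IsPolyhedronOver K t) :
    IsPolyhedronOver K (s ∩ t) := by
  obtain ⟨κ, _, f, hf, rfl⟩ := hs
  obtain ⟨κ', _, f', hf', rfl⟩ := ht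
  refine ⟨κ ⊕ κ', inferInstance, Sum.elim f f', Sum.forall.2 ⟨hf, hf'⟩, ?_⟩
  ext x
  simp [Sum.forall]

theorem iInter {α : Type} [Finite α] {s : α → Set (ι → ℝ)} (h : ∀ a, IsPolyhedronOver K (s a)) :
    IsPolyhedronOver K (⋂ a, s a) := by
  choose κ _ f hf hs using h
  refine ⟨Σ a, κ a, inferInstance, fun p => f p.1 p.2, fun p => hf p.1 p.2, ?_⟩
  ext x
  simp [hs, Sigma.forall]

theorem setOf_le {f g : (ι → ℝ) →ᵃ[ℝ] ℝ} (hf : MapsTo f (pointsOver K ι) K)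
    (hg : MapsTo g (pointsOver K ι) K) : IsPolyhedronOver K {x | f x ≤ g x} :=
  ⟨Unit, inferInstance, fun _ => f - g, fun _ _ hx => sub_mem (hf hx) (hg hx), by ext; simp⟩

theorem setOf_eq {f g : (ι → ℝ) →ᵃ[ℝ] ℝ} (hf : MapsTo f (pointsOver K ι) K)
    (hg : MapsTo g (pointsOver K ι) K) : IsPolyhedronOver K {x | f x = g x} := by
  convert (setOf_le hf hg).inter (setOf_le hg hf) using 1
  ext
  simp [le_antisymm_iff]

end IsPolyhedronOver

theorem isPolyhedronOver_convexCombinations {η α : Type} [Finite η] [Finite α] {T : α → Type}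
    [∀ a, Fintype (T a)] {z : (a : α) → T a → η → ℝ} (hz : ∀ a k, z a k ∈ pointsOver K η) :
    IsPolyhedronOver K ((⋂ a, ⋂ j, {X : η ⊕ (Σ a, T a) → ℝ |
      X (.inl j) = ∑ k, z a k j * X (.inr ⟨a, k⟩)}) ∩
        (⋂ p, {X | 0 ≤ X (.inr p)}) ∩ ⋂ a, {X | ∑ k, X (.inr ⟨a, k⟩) = 1}) := by
  let π : η ⊕ (Σ a, T a) → (η ⊕ (Σ a, T a) → ℝ) →ₗ[ℝ] ℝ := LinearMap.proj
  have hπ : ∀ {X}, X ∈ pointsOver K _ → ∀ l, π l X ∈ K := fun hX l => hX l trivial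
  refine .inter (.inter (.iInter fun a => .iInter fun j => ?_) (.iInter fun p => ?_))
    (.iInter fun a => ?_)
  · simpa [π] using IsPolyhedronOver.setOf_eq (f := (π (.inl j)).toAffineMap)
      (g := (∑ k, z a k j • π (.inr ⟨a, k⟩)).toAffineMap) (fun X hX => hπ hX _)
      (fun X hX => by
        simpa [π] using sum_mem fun k _ => mul_mem (hz a k j trivial) (hπ hX _))
  · simpa [π] using IsPolyhedronOver.setOf_le (f := AffineMap.const ℝ _ 0)
      (g := (π (.inr p)).toAffineMap) (fun X _ => zero_mem _) (fun X hX => hπ hX _)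
  · simpa [π] using IsPolyhedronOver.setOf_eq (f := (∑ k, π (.inr ⟨a, k⟩)).toAffineMap)
      (g := AffineMap.const ℝ _ 1)
      (fun X hX => by simpa [π] using sum_mem fun k _ => hπ hX _) (fun X _ => one_mem _)

end PolyhedronOver

theorem iInter_convexHull_subset_convexHull_iInter_convexHull_rat {η α : Type} [Fintype η]
    [Finite α] {s : α → Set (η → ℝ)} (hs : ∀ a, s a ⊆ pointsOver (Rat.castHom ℝ).fieldRange η) :
    ⋂ a, convexHull ℝ (s a) ⊆ convexHull ℝ (⋂ a, convexHull ℚ (s a)) := by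
  have := Fintype.ofFinite α
  intro x hx
  choose T _ w z hw₀ hw₁ hzs hwz using fun a =>
    mem_convexHull_iff_exists_fintype.1 (mem_iInter.1 hx a)
  -- In the lifted space, `inl j` is the `j`-th coordinate of the point and `inr ⟨a, k⟩` the
  -- weight of `z a k` in its `a`-th convex combination.
  have hQ := isPolyhedronOver_convexCombinations (z := z) fun a k => hs a (hzs a k)
  have hxw := hQ.subset_convexHull_inter_pointsOver
    (a := Sum.elim x fun p : (Σ a, T a) => w p.1 p.2) <| by
      simp only [mem_inter_iff, mem_iInter, mem_ofPred_eq, Sum.elim_inl, Sum.elim_inr]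
      refine ⟨⟨fun a j => ?_, fun p => hw₀ _ _⟩, hw₁⟩
      rw [← hwz a]
      simp [mul_comm]
  have := mem_image_of_mem (LinearMap.funLeft ℝ ℝ Sum.inl) hxw
  rw [LinearMap.image_convexHull] at this
  refine convexHull_mono ?_ this
  rintro _ ⟨X, ⟨⟨⟨hpt, hnonneg⟩, hsum⟩, hK⟩, rfl⟩
  simp only [mem_iInter, mem_ofPred_eq] at hpt hnonneg hsum
  refine mem_iInter.2 fun a => ?_
  choose q hq using fun k => hK (.inr ⟨a, k⟩) trivial
  simp only [Rat.coe_castHom] at hq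
  refine mem_convexHull_iff_exists_fintype.2
    ⟨T a, inferInstance, q, z a, fun k => ?_, ?_, hzs a, ?_⟩
  · exact_mod_cast (hq k).symm ▸ hnonneg ⟨a, k⟩
  · exact_mod_cast (by simpa [← hq] using hsum a : ∑ k, (q k : ℝ) = 1)
  · ext j
    simp [hpt a j, ← hq, Rat.smul_def, mul_comm]

theorem nsmul_mem_of_add_subset {E : Type*} [AddMonoid E] {S : ℕ → Set E}
    (hS : ∀ p q, S p + S q ⊆ S (p + q)) {p m : ℕ} (hm : 1 ≤ m) {y : E} (hy : y ∈ S p) :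
    m • y ∈ S (m * p) := by
  induction m, hm using Nat.le_induction with
  | base => simpa using hy
  | succ m _ ih => simpa [succ_nsmul, add_mul] using hS _ _ (add_mem_add ih hy)

theorem convex_iUnion_inv_smul_convexHull {E : Type*} [AddCommGroup E] [Module ℝ E]
    {S : ℕ → Set E} (hS : ∀ p q, S p + S q ⊆ S (p + q)) :
    Convex ℝ (⋃ p : ℕ, ⋃ _ : 1 ≤ p, (p : ℝ)⁻¹ • convexHull ℝ (S p)) := by
  have hmono : ∀ p m : ℕ, 1 ≤ m →
      (p : ℝ)⁻¹ • convexHull ℝ (S p) ⊆ ((m * p : ℕ) : ℝ)⁻¹ • convexHull ℝ (S (m * p)) := by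
    intro p m hm
    have hm₀ : (m : ℝ) ≠ 0 := by positivity
    have hsub : (m : ℝ) • convexHull ℝ (S p) ⊆ convexHull ℝ (S (m * p)) := by
      rw [← convexHull_smul]
      refine convexHull_mono ?_
      rintro _ ⟨y, hy, rfl⟩
      simpa [Nat.cast_smul_eq_nsmul] using nsmul_mem_of_add_subset hS hm hy
    calc (p : ℝ)⁻¹ • convexHull ℝ (S p)
      _ = ((m * p : ℕ) : ℝ)⁻¹ • ((m : ℝ) • convexHull ℝ (S p)) := by
        rw [smul_smul, Nat.cast_mul, mul_inv, mul_comm (m : ℝ)⁻¹, mul_assoc,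
          inv_mul_cancel₀ hm₀, mul_one]
      _ ⊆ _ := smul_set_mono hsub
  intro a ha b hb μ ν hμ hν hμν
  simp only [mem_iUnion] at ha hb ⊢
  obtain ⟨p, hp, ha⟩ := ha
  obtain ⟨q, hq, hb⟩ := hb
  refine ⟨q * p, Nat.one_le_iff_ne_zero.2 (by positivity), ?_⟩
  have hconv := (convex_convexHull ℝ (S (q * p))).smul ((q * p : ℕ) : ℝ)⁻¹
  refine hconv (hmono p q hq ha) ?_ hμ hν hμν
  rw [mul_comm q]
  exact hmono q p hp hb

theorem Rat.exists_nat_forall_mul_eq_natCast {T : Type*} [Fintype T] (w : T → ℚ)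
    (hw : ∀ k, 0 ≤ w k) : ∃ D : ℕ, 0 < D ∧ ∀ k, ∃ m : ℕ, (m : ℚ) = D * w k := by
  refine ⟨∏ k, (w k).den, Finset.prod_pos fun k _ => (w k).den_pos, fun k => ?_⟩
  obtain ⟨e, he⟩ := Finset.dvd_prod_of_mem (fun k => (w k).den) (Finset.mem_univ k)
  refine ⟨e * (w k).num.toNat, ?_⟩
  rw [he, Nat.cast_mul, Nat.cast_mul, mul_comm ((w k).den : ℚ), mul_assoc, Rat.den_mul_eq_num]
  congr 1
  exact_mod_cast Int.toNat_of_nonneg (Rat.num_nonneg.2 (hw k))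

theorem MvPolynomial.exists_add_eq_of_mem_support_of_mem_mul {σ R : Type*} [CommSemiring R]
    {I J : Ideal (MvPolynomial σ R)} {P Q : (σ →₀ ℕ) → Prop}
    (hI : ∀ f ∈ I, ∀ v ∈ f.support, P v) (hJ : ∀ g ∈ J, ∀ v ∈ g.support, Q v)
    {h : MvPolynomial σ R} (hh : h ∈ I * J) {v : σ →₀ ℕ} (hv : v ∈ h.support) :
    ∃ v₁ v₂, P v₁ ∧ Q v₂ ∧ v₁ + v₂ = v := by
  classical
  suffices ∀ v ∈ h.support, ∃ v₁ v₂, P v₁ ∧ Q v₂ ∧ v₁ + v₂ = v from this v hv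
  refine Submodule.mul_induction_on hh (fun f hf g hg v hv => ?_) (fun f g ihf ihg v hv => ?_)
  · obtain ⟨v₁, hv₁, v₂, hv₂, rfl⟩ := Finset.mem_add.1 (support_mul f g hv)
    exact ⟨v₁, v₂, hI f hf v₁ hv₁, hJ g hg v₂ hv₂, rfl⟩
  · rcases Finset.mem_union.1 (support_add hv) with hv | hv
    · exact ihf v hv
    · exact ihg v hv

namespace ELS

variable {n : ℕ}

def expVec {σ : Type*} : (σ →₀ ℕ) →+ (σ → ℝ) where
  toFun v i := v i
  map_zero' := by ext; simp
  map_add' _ _ := by ext; simp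

@[simp]
theorem expVec_apply {σ : Type*} (v : σ →₀ ℕ) (i : σ) : expVec v i = v i := rfl

theorem expVec_injective {σ : Type*} : Function.Injective (expVec : (σ →₀ ℕ) → σ → ℝ) :=
  fun _ _ h => Finsupp.ext fun i => by simpa using congrFun h i

theorem mem_monomSet {a : Ideal (MvPolynomial (Fin n) ℂ)} {x : Fin n → ℝ} :
    x ∈ monomSet a ↔ ∃ v, monomial v (1 : ℂ) ∈ a ∧ expVec v = x := by
  simp only [monomSet, eq_comm]; rfl

theorem monomSet_mono {a b : Ideal (MvPolynomial (Fin n) ℂ)} (h : a ≤ b) :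
    monomSet a ⊆ monomSet b :=
  fun _ ⟨v, hv, hx⟩ => ⟨v, h hv, hx⟩

theorem newt_mono {a b : Ideal (MvPolynomial (Fin n) ℂ)} (h : a ≤ b) : newt a ⊆ newt b :=
  convexHull_mono (monomSet_mono h)

theorem monomSet_add_subset_mul (a b : Ideal (MvPolynomial (Fin n) ℂ)) :
    monomSet a + monomSet b ⊆ monomSet (a * b) := by
  rintro _ ⟨_, ⟨u, hu, rfl⟩, _, ⟨v, hv, rfl⟩, rfl⟩
  refine ⟨u + v, ?_, by ext; simp⟩
  simpa using Ideal.mul_mem_mul hu hv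

theorem monomSet_iInf {α : Type*} [Nonempty α] (J : α → Ideal (MvPolynomial (Fin n) ℂ)) :
    monomSet (⨅ i, J i) = ⋂ i, monomSet (J i) := by
  refine Subset.antisymm (subset_iInter fun i => monomSet_mono (iInf_le J i)) fun x hx => ?_
  obtain ⟨i₀⟩ := ‹Nonempty α›
  obtain ⟨v, -, rfl⟩ := mem_monomSet.1 (mem_iInter.1 hx i₀)
  refine mem_monomSet.2 ⟨v, Submodule.mem_iInf _ |>.2 fun i => ?_, rfl⟩
  obtain ⟨w, hw, hwv⟩ := mem_monomSet.1 (mem_iInter.1 hx i)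
  rwa [← expVec_injective hwv]

theorem newt_pow_subset {a : Ideal (MvPolynomial (Fin n) ℂ)} (ha : IsMonomialIdeal a)
    {p : ℕ} (hp : 1 ≤ p) : newt (a ^ p) ⊆ (p : ℝ) • newt a := by
  have hconv : Convex ℝ (newt a) := convex_convexHull ℝ _
  have hsupp : ∀ f ∈ a ^ p, ∀ v ∈ f.support, expVec v ∈ (p : ℝ) • newt a := by
    induction p, hp using Nat.le_induction with
    | base =>
      intro f hf v hv
      rw [pow_one] at hf
      rw [Nat.cast_one, one_smul]
      exact subset_convexHull ℝ (monomSet a) ⟨v, ha f hf v hv, rfl⟩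
    | succ p hp ih =>
      intro f hf v hv
      rw [pow_succ] at hf
      obtain ⟨v₁, v₂, hv₁, hv₂, rfl⟩ := MvPolynomial.exists_add_eq_of_mem_support_of_mem_mul ih
        (fun g hg w hw => subset_convexHull ℝ (monomSet a) ⟨w, ha g hg w hw, rfl⟩) hf hv
      rw [map_add, Nat.cast_succ, hconv.add_smul (by positivity) zero_le_one, one_smul]
      exact add_mem_add hv₁ hv₂
  refine convexHull_min ?_ (hconv.smul _)
  rintro _ ⟨v, hv, rfl⟩
  exact hsupp _ hv v (by simp [MvPolynomial.support_monomial])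

theorem monomial_sum_nsmul_mem_pow {T : Type*} {a : Ideal (MvPolynomial (Fin n) ℂ)}
    (s : Finset T) (v : T → Fin n →₀ ℕ) (hv : ∀ k, monomial (v k) (1 : ℂ) ∈ a) (m : T → ℕ) :
    monomial (∑ k ∈ s, m k • v k) (1 : ℂ) ∈ a ^ ∑ k ∈ s, m k := by
  rw [monomial_sum_one, ← Finset.prod_pow_eq_pow_sum]
  exact Ideal.prod_mem_prod fun k _ => by
    simpa [monomial_pow] using Ideal.pow_mem_pow (hv k) (m k)

theorem exists_smul_mem_monomSet_pow_of_mem_convexHull_rat {a : Ideal (MvPolynomial (Fin n) ℂ)}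
    {y : Fin n → ℝ} (hy : y ∈ convexHull ℚ (monomSet a)) :
    ∃ p : ℕ, 0 < p ∧ (p : ℝ) • y ∈ monomSet (a ^ p) := by
  obtain ⟨T, _, w, z, hw₀, hw₁, hz, rfl⟩ := mem_convexHull_iff_exists_fintype.1 hy
  choose v hva hvz using fun k => mem_monomSet.1 (hz k)
  obtain ⟨D, hD, hm⟩ := Rat.exists_nat_forall_mul_eq_natCast w hw₀
  choose m hm using hm
  have hmD : ∑ k, m k = D := by
    exact_mod_cast (by simp [hm, ← Finset.mul_sum, hw₁] : (∑ k, m k : ℚ) = D)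
  refine ⟨D, hD, mem_monomSet.2 ⟨∑ k, m k • v k, hmD ▸ monomial_sum_nsmul_mem_pow _ v hva m, ?_⟩⟩
  ext j
  have hmR : ∀ k, (m k : ℝ) = D * (w k : ℝ) := fun k => by
    exact_mod_cast congrArg (Rat.cast : ℚ → ℝ) (hm k)
  simp [← hvz, Finset.mul_sum, Rat.smul_def, hmR, mul_assoc]

theorem monomSet_subset_pointsOver (a : Ideal (MvPolynomial (Fin n) ℂ)) :
    monomSet a ⊆ pointsOver (Rat.castHom ℝ).fieldRange (Fin n) := by
  rintro _ ⟨v, -, rfl⟩ i -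
  exact ⟨v i, by simp⟩

theorem monomSet_iInf_pow_add_subset {α : Type*} (C : α → Ideal (MvPolynomial (Fin n) ℂ))
    (p q : ℕ) :
    monomSet (⨅ i, C i ^ p) + monomSet (⨅ i, C i ^ q) ⊆ monomSet (⨅ i, C i ^ (p + q)) :=
  (monomSet_add_subset_mul _ _).trans <| monomSet_mono <| le_iInf fun i =>
    (Ideal.mul_mono (iInf_le _ i) (iInf_le _ i)).trans (pow_add (C i) p q).ge

theorem iInter_convexHull_rat_monomSet_subset {α : Type*} [Finite α] [Nonempty α]
    (C : α → Ideal (MvPolynomial (Fin n) ℂ)) :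
    ⋂ i, convexHull ℚ (monomSet (C i)) ⊆
      ⋃ p : ℕ, ⋃ _ : 1 ≤ p, (p : ℝ)⁻¹ • monomSet (⨅ i, C i ^ p) := by
  have := Fintype.ofFinite α
  intro y hy
  choose p hp hpy using fun i =>
    exists_smul_mem_monomSet_pow_of_mem_convexHull_rat (mem_iInter.1 hy i)
  have hP : 0 < ∏ i, p i := Finset.prod_pos fun i _ => hp i
  have hPy : ∀ i, ((∏ i, p i : ℕ) : ℝ) • y ∈ monomSet (C i ^ ∏ i, p i) := by
    intro i
    obtain ⟨e, he⟩ := Finset.dvd_prod_of_mem p (Finset.mem_univ i)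
    have he₁ : 1 ≤ e := Nat.one_le_iff_ne_zero.2 fun h => by simp [h] at he; omega
    have := nsmul_mem_of_add_subset (S := fun q => monomSet (C i ^ q))
      (fun p q => by simpa [pow_add] using monomSet_add_subset_mul _ _) he₁ (hpy i)
    rwa [he, mul_comm, Nat.cast_mul, mul_smul, Nat.cast_smul_eq_nsmul]
  refine mem_iUnion₂.2 ⟨_, hP, _, ?_, inv_smul_smul₀ (by positivity) y⟩
  rw [monomSet_iInf]
  exact mem_iInter.2 hPy

end ELS

theorem stmt7_general {n r : ℕ} (hr : 1 ≤ r) (C : Fin r → Ideal (MvPolynomial (Fin n) ℂ))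
    (hmono : ∀ i, ELS.IsMonomialIdeal (C i)) :
    (⋃ p : ℕ, ⋃ _ : 1 ≤ p, ((p : ℝ)⁻¹) • ELS.newt (⨅ i, (C i) ^ p)) = ⋂ i, ELS.newt (C i) := by
  have : Nonempty (Fin r) := ⟨⟨0, hr⟩⟩
  refine Subset.antisymm (iUnion₂_subset fun p hp => subset_iInter fun i => ?_) ?_
  · calc _ ⊆ (p : ℝ)⁻¹ • ((p : ℝ) • ELS.newt (C i)) :=
          smul_set_mono ((ELS.newt_mono (iInf_le (fun i => C i ^ p) i)).trans
            (ELS.newt_pow_subset (hmono i) hp))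
      _ = ELS.newt (C i) := inv_smul_smul₀ (Nat.cast_ne_zero.2 (by omega)) _
  · calc ⋂ i, ELS.newt (C i) ⊆ convexHull ℝ (⋂ i, convexHull ℚ (ELS.monomSet (C i))) :=
          iInter_convexHull_subset_convexHull_iInter_convexHull_rat fun i =>
            ELS.monomSet_subset_pointsOver (C i)
      _ ⊆ convexHull ℝ (⋃ p : ℕ, ⋃ _ : 1 ≤ p, (p : ℝ)⁻¹ • ELS.monomSet (⨅ i, C i ^ p)) :=
          convexHull_mono (ELS.iInter_convexHull_rat_monomSet_subset C)
      _ ⊆ _ := convexHull_min (iUnion₂_mono fun p _ => smul_set_mono (subset_convexHull ℝ _))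
          (convex_iUnion_inv_smul_convexHull (ELS.monomSet_iInf_pow_add_subset C))

/-- for the graded system `I_p = C_1^p ∩ … ∩ C_r^p` of monomial ideals,
`⋃_{p≥1} (1/p)·Newt(I_p) = Newt(C_1) ∩ … ∩ Newt(C_r)`. -/
theorem stmt7 {n r : ℕ} (hr : 1 ≤ r) (C : Fin r → Ideal (MvPolynomial (Fin n) ℂ))
    (hne : ∀ i, C i ≠ ⊥) (hmono : ∀ i, ELS.IsMonomialIdeal (C i)) :
    (⋃ p : ℕ, ⋃ _ : 1 ≤ p, ((p : ℝ)⁻¹) • ELS.newt (⨅ i, (C i) ^ p)) = ⋂ i, ELS.newt (C i) :=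
  stmt7_general hr C hmono
end

section
/- Let I be a nonzero squarefree (radical) monomial ideal of ℂ[x_1,…,x_n] with minimal primes C_1, …, C_r. Then ⋃_{p≥1} (1/p)·Newt(I^{(p)}) = Newt(C_1) ∩ … ∩ Newt(C_r), where I^{(p)} denotes the p-th symbolic power of I. -/
open Ideal MvPolynomial Pointwise

/-!
The minimal primes of a monomial ideal are generated by sets of variables `S_j`, and for radical
`I` a monomial `x^v` lies in `I^{(p)}` iff `∑_{i ∈ S_j} v_i ≥ p` for all `j`. Indeed, if `x^v` lies
in the `p`-th power of every minimal prime, prime avoidance yields a multiplier outside all of them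
carrying `x^v` into `I^p`; conversely, a multiplier outside `P_{S_j}` has a monomial free of the
variables in `S_j`. Hence `(1/p)·Newt(I^{(p)}) ⊆ Newt(C_j)`, while each rational point of the
polyhedron `{x ≥ 0 | ∑_{i ∈ S_j} x_i ≥ 1 for all j} ⊇ ⋂ Newt(C_j)` is `v/p` for such a monomial.
The union over `p` is convex, as `(1/p)·Newt(I^{(p)}) ⊆ (1/pq)·Newt(I^{(pq)})`, and a polyhedron
cut out by rational inequalities is the convex hull of its rational points.
-/

theorem Finsupp.exists_eq_add_single_of_sum_ne_zero {σ : Type*} {S : Finset σ} {m : σ →₀ ℕ}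
    (h : ∑ i ∈ S, m i ≠ 0) :
    ∃ i ∈ S, ∃ w : σ →₀ ℕ, m = w + Finsupp.single i 1 ∧ ∑ k ∈ S, m k = ∑ k ∈ S, w k + 1 := by
  classical
  obtain ⟨i, hiS, hmi⟩ := Finset.exists_ne_zero_of_sum_ne_zero h
  obtain ⟨w, rfl⟩ : ∃ w, m = w + Finsupp.single i 1 :=
    ⟨m - Finsupp.single i 1, (tsub_add_cancel_of_le
      (Finsupp.single_le_iff.mpr (Nat.one_le_iff_ne_zero.mpr hmi))).symm⟩
  refine ⟨i, hiS, w, rfl, ?_⟩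
  simp [Finsupp.single_apply, Finset.sum_add_distrib, hiS]

namespace MvPolynomial

variable {σ R : Type*}

section CommSemiring

variable [CommSemiring R]

theorem monomial_mem_pow_span_X_image {S : Finset σ} {p : ℕ} {m : σ →₀ ℕ}
    (hm : p ≤ ∑ i ∈ S, m i) (a : R) :
    monomial m a ∈ Ideal.span (X '' (S : Set σ) : Set (MvPolynomial σ R)) ^ p := by
  induction p generalizing m with
  | zero => simp
  | succ p ih =>
    obtain ⟨i, hiS, w, rfl, hsum⟩ := Finsupp.exists_eq_add_single_of_sum_ne_zero
      (S := S) (m := m) (by omega)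
    rw [← mul_one a, ← monomial_mul, pow_succ]
    exact Ideal.mul_mem_mul (ih (by omega)) (Ideal.subset_span ⟨i, hiS, rfl⟩)

theorem mem_pow_span_X_image_iff {S : Finset σ} {p : ℕ} {f : MvPolynomial σ R} :
    f ∈ Ideal.span (X '' (S : Set σ)) ^ p ↔ ∀ m ∈ f.support, p ≤ ∑ i ∈ S, m i := by
  classical
  refine ⟨fun hf => ?_, fun hf => ?_⟩
  · induction p generalizing f with
    | zero => simp
    | succ p ih =>
      rw [pow_succ] at hf
      refine Submodule.mul_induction_on hf (fun g hg h hh m hm => ?_) (fun g h hg hh m hm => ?_)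
      · obtain ⟨u, hu, w, hw, rfl⟩ := Finset.mem_add.mp (support_mul g h hm)
        obtain ⟨i, hiS, hwi⟩ := mem_ideal_span_X_image.mp hh w hw
        have hw1 : 1 ≤ ∑ k ∈ S, w k :=
          (Nat.one_le_iff_ne_zero.mpr hwi).trans (Finset.single_le_sum (by simp) hiS)
        simp only [Finsupp.add_apply, Finset.sum_add_distrib]
        have := ih hg u hu
        omega
      · rcases Finset.mem_union.mp (support_add hm) with hm | hm
        exacts [hg m hm, hh m hm]
  · rw [f.as_sum]
    exact Ideal.sum_mem _ fun m hm => monomial_mem_pow_span_X_image (hf m hm) _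

theorem le_sum_of_mul_monomial_mem_pow_span_X_image {S : Finset σ} {p : ℕ}
    {s : MvPolynomial σ R} (hs : s ∉ Ideal.span (X '' (S : Set σ))) {v : σ →₀ ℕ}
    (h : s * monomial v 1 ∈ Ideal.span (X '' (S : Set σ)) ^ p) :
    p ≤ ∑ i ∈ S, v i := by
  obtain ⟨m, hm, hmS⟩ : ∃ m ∈ s.support, ∀ i ∈ S, m i = 0 := by
    simpa [mem_ideal_span_X_image] using hs
  have hmv : m + v ∈ (s * monomial v 1).support := by
    rw [mem_support_iff, coeff_mul_monomial, mul_one]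
    exact mem_support_iff.mp hm
  have := mem_pow_span_X_image_iff.mp h _ hmv
  simpa [Finset.sum_add_distrib, Finset.sum_eq_zero hmS] using this

theorem exists_X_mem_of_monomial_mem {P : Ideal (MvPolynomial σ R)} (hP : P.IsPrime)
    {m : σ →₀ ℕ} (hm : monomial m (1 : R) ∈ P) : ∃ i, m i ≠ 0 ∧ X i ∈ P := by
  rw [monomial_eq, C_1, one_mul, Finsupp.prod, hP.prod_mem_iff] at hm
  obtain ⟨i, hi, hXi⟩ := hm
  exact ⟨i, Finsupp.mem_support_iff.mp hi, hP.mem_of_pow_mem _ hXi⟩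

end CommSemiring

section CommRing

variable [CommRing R]

open Classical in
noncomputable def killVars (s : Set σ) : MvPolynomial σ R →ₐ[R] MvPolynomial σ R :=
  aeval fun i => if i ∈ s then 0 else X i

theorem ker_killVars (s : Set σ) :
    RingHom.ker (killVars (R := R) s) = Ideal.span (X '' s) := by
  classical
  set P : Ideal (MvPolynomial σ R) := Ideal.span (X '' s)
  -- modulo `P`, killing the variables in `s` changes nothing
  have hmk : (Ideal.Quotient.mkₐ R P).comp (killVars s) = Ideal.Quotient.mkₐ R P := by
    refine algHom_ext fun i => ?_
    by_cases hi : i ∈ s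
    · have hXi : X i ∈ P := Ideal.subset_span ⟨i, hi, rfl⟩
      simp [killVars, hi, Ideal.Quotient.eq_zero_iff_mem.mpr hXi]
    · simp [killVars, hi]
  refine le_antisymm (fun f hf => ?_) (Ideal.span_le.mpr ?_)
  · rw [← Ideal.Quotient.eq_zero_iff_mem, ← Ideal.Quotient.mkₐ_eq_mk R, ← hmk]
    simp [RingHom.mem_ker.mp hf]
  · rintro _ ⟨i, hi, rfl⟩
    simp [killVars, hi]

theorem isPrime_span_X_image [IsDomain R] (s : Set σ) :
    (Ideal.span (X '' s : Set (MvPolynomial σ R))).IsPrime :=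
  ker_killVars (R := R) s ▸ RingHom.ker_isPrime _

theorem exists_eq_span_X_image_of_mem_minimalPrimes [IsDomain R]
    {I P : Ideal (MvPolynomial σ R)} (hI : ∀ f ∈ I, ∀ v ∈ f.support, monomial v (1 : R) ∈ I)
    (hP : P ∈ I.minimalPrimes) : P = Ideal.span (X '' {i | X i ∈ P}) := by
  have hle : Ideal.span (X '' {i | X i ∈ P}) ≤ P := by
    rw [Ideal.span_le]
    rintro _ ⟨i, hi, rfl⟩
    exact hi
  refine le_antisymm (hP.2 ⟨isPrime_span_X_image _, fun f hf => ?_⟩ hle) hle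
  refine mem_ideal_span_X_image.mpr fun m hm => ?_
  obtain ⟨i, hmi, hXi⟩ := exists_X_mem_of_monomial_mem hP.1.1 (hP.1.2 (hI f hf m hm))
  exact ⟨i, hXi, hmi⟩

end CommRing

end MvPolynomial

theorem Irrational.exists_linearMap_eq_zero_eq_one {ξ : ℝ} (hξ : Irrational ξ) :
    ∃ ψ : ℝ →ₗ[ℚ] ℚ, ψ 1 = 0 ∧ ψ ξ = 1 := by
  have hξ1 : ξ ∉ Submodule.span ℚ {(1 : ℝ)} := by
    rw [Submodule.mem_span_singleton]
    rintro ⟨q, rfl⟩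
    exact hξ ⟨q, by simp [Rat.smul_def]⟩
  obtain ⟨φ, hφξ, hφ⟩ := Submodule.exists_dual_map_eq_bot_of_notMem hξ1 inferInstance
  have hφ1 : φ 1 = 0 := by
    simpa [hφ] using Submodule.mem_map_of_mem (f := φ) (Submodule.mem_span_singleton_self (1 : ℝ))
  exact ⟨(φ ξ)⁻¹ • φ, by simp [hφ1], by simp [hφξ]⟩

namespace ELS

section SymbolicPower

variable {R : Type*} [CommRing R]

theorem mem_satIdeal_iff {S : Submonoid R} {J : Ideal R} {x : R} :
    x ∈ satIdeal S J ↔ ∃ s ∈ S, s * x ∈ J :=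
  IsLocalization.algebraMap_mem_map_algebraMap_iff S _ J x

theorem exists_notMem_mul_mem_of_mem_minimalPrimes {I P : Ideal R} (hI : I.IsRadical)
    (hfin : I.minimalPrimes.Finite) (hP : P ∈ I.minimalPrimes) :
    ∃ m ∉ P, ∀ y ∈ P, m * y ∈ I := by
  classical
  have hnle : ¬ (hfin.toFinset.erase P).inf id ≤ P := by
    rw [hP.1.1.inf_le']
    rintro ⟨Q, hQ, hQP⟩
    rw [Finset.mem_erase, Set.Finite.mem_toFinset] at hQ
    exact hQ.1 (le_antisymm hQP (hP.2 hQ.2.1 hQP))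
  obtain ⟨m, hm, hmP⟩ := SetLike.not_le_iff_exists.mp hnle
  refine ⟨m, hmP, fun y hy => ?_⟩
  rw [← hI.radical, ← Ideal.sInf_minimalPrimes, Submodule.mem_sInf]
  intro Q hQ
  by_cases hQP : Q = P
  · exact hQP ▸ Ideal.mul_mem_left _ _ hy
  · have hQm : (hfin.toFinset.erase P).inf id ≤ Q :=
      Finset.inf_le (f := id) (Finset.mem_erase.mpr ⟨hQP, hfin.mem_toFinset.mpr hQ⟩)
    exact Ideal.mul_mem_right _ _ (hQm hm)

theorem iInf_pow_le_symbolicPower {I : Ideal R} (hI : I.IsRadical)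
    (hfin : I.minimalPrimes.Finite) (p : ℕ) :
    ⨅ P ∈ I.minimalPrimes, P ^ p ≤ symbolicPower I p := by
  classical
  intro x hx
  simp only [Ideal.mem_iInf] at hx
  set J : Ideal R := (I ^ p).colon {x}
  have hJ : ∀ P ∈ I.minimalPrimes, ¬ J ≤ P := by
    intro P hP hJP
    obtain ⟨m, hmP, hmI⟩ := exists_notMem_mul_mem_of_mem_minimalPrimes hI hfin hP
    have hmx : m ^ p * x ∈ I ^ p := by
      have hle : (Ideal.span {m} * P) ^ p ≤ I ^ p :=
        Ideal.pow_right_mono (Ideal.span_singleton_mul_le_iff.mpr hmI) p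
      rw [mul_pow, Ideal.span_singleton_pow] at hle
      exact hle (Ideal.mul_mem_mul (Ideal.mem_span_singleton_self _) (hx P hP))
    exact hmP (hP.1.1.mem_of_pow_mem p (hJP (Submodule.mem_colon_singleton.mpr hmx)))
  have hJunion : ¬ (J : Set R) ⊆ ⋃ P ∈ (hfin.toFinset : Set (Ideal R)), P := by
    rw [Ideal.subset_union_prime ⊥ ⊥ fun P hP _ _ => (hfin.mem_toFinset.mp hP).1.1]
    rintro ⟨P, hP, hJP⟩
    exact hJ P (hfin.mem_toFinset.mp hP) hJP
  obtain ⟨s, hsJ, hs⟩ := Set.not_subset.mp hJunion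
  simp only [Set.mem_iUnion, SetLike.mem_coe, Set.Finite.coe_toFinset,
    not_exists] at hs
  exact mem_satIdeal_iff.mpr
    ⟨s, fun Q hQ hsQ => hs Q hQ hsQ, Submodule.mem_colon_singleton.mp hsJ⟩

theorem monomial_mem_symbolicPower_iff {σ κ : Type*} [Finite κ]
    {I : Ideal (MvPolynomial σ R)} (hI : I.IsRadical) {S : κ → Finset σ}
    (hS : I.minimalPrimes = Set.range fun j => Ideal.span (X '' (S j : Set σ)))
    (p : ℕ) (v : σ →₀ ℕ) :
    monomial v (1 : R) ∈ symbolicPower I p ↔ ∀ j, p ≤ ∑ i ∈ S j, v i := by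
  have hmem : ∀ j, Ideal.span (X '' (S j : Set σ)) ∈ I.minimalPrimes := fun j => hS ▸ ⟨j, rfl⟩
  refine ⟨fun h j => ?_, fun h => ?_⟩
  · obtain ⟨s, hs, hsv⟩ := mem_satIdeal_iff.mp h
    exact le_sum_of_mul_monomial_mem_pow_span_X_image (hs _ (hmem j))
      (Ideal.pow_right_mono (hmem j).1.2 p hsv)
  · refine iInf_pow_le_symbolicPower hI (hS ▸ Set.finite_range _) p ?_
    simp only [Ideal.mem_iInf, hS, Set.forall_mem_range, mem_pow_span_X_image_iff]
    intro j m hm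
    exact Finset.mem_singleton.mp (support_monomial_subset hm) ▸ h j

end SymbolicPower

section RationalPolyhedron

open Module Filter Topology

variable {ι κ : Type*} [Fintype ι]

def ratPolyhedron (a : κ → ι → ℚ) (b : κ → ℚ) : Set (ι → ℝ) :=
  {x | ∀ k, (b k : ℝ) ≤ ∑ i, (a k i : ℝ) * x i}

variable (ι) in
def ratPoints : Set (ι → ℝ) := Set.range fun q : ι → ℚ => fun i => (q i : ℝ)

/-- Tight constraints stay tight in the direction `ψ ∘ x`, because `ψ` kills their rational
right-hand sides; the others remain valid nearby. -/
theorem eventually_add_smul_mem_ratPolyhedron [Finite κ] {a : κ → ι → ℚ} {b : κ → ℚ}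
    {x : ι → ℝ} (hx : x ∈ ratPolyhedron a b) {ψ : ℝ →ₗ[ℚ] ℚ} (hψ : ψ 1 = 0) :
    ∀ᶠ s in 𝓝 (0 : ℝ), x + s • (fun i => (ψ (x i) : ℝ)) ∈ ratPolyhedron a b := by
  refine eventually_all.mpr fun k => ?_
  set c := ∑ i, (a k i : ℝ) * x i
  set d := ∑ i, (a k i : ℝ) * ψ (x i)
  have hψc : (ψ c : ℝ) = d := by
    simp [c, d, ← Rat.smul_def]
  have hval : ∀ s : ℝ, ∑ i, (a k i : ℝ) * (x + s • fun i => (ψ (x i) : ℝ)) i = c + s * d := by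
    intro s
    simp only [Pi.add_apply, Pi.smul_apply, smul_eq_mul, c, d, Finset.mul_sum,
      ← Finset.sum_add_distrib]
    exact Finset.sum_congr rfl fun i _ => by ring
  simp only [hval]
  rcases (hx k).lt_or_eq with hlt | heq
  · have hlim : Tendsto (fun s : ℝ => c + s * d) (𝓝 0) (𝓝 c) :=
      (continuous_const.add (continuous_id.mul continuous_const)).tendsto' 0 c
        (by show c + 0 * d = c; ring)
    exact (hlim.eventually_const_lt hlt).mono fun _ => le_of_lt
  · have hd : d = 0 := by
      rw [← hψc, show c = (b k : ℝ) from heq.symm, ← mul_one (b k : ℝ), ← Rat.smul_def,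
        map_smul, hψ, smul_zero, Rat.cast_zero]
    exact Eventually.of_forall fun s => by rw [hd, mul_zero, add_zero]; exact hx k

theorem finrank_span_insert_one_range_lt {x y : ι → ℝ} {ψ : ℝ →ₗ[ℚ] ℚ} {i₀ : ι}
    (hx : ψ (x i₀) ≠ 0) (hψ : ψ 1 = 0)
    (hy : ∀ i, y i ∈ Submodule.span ℚ (insert 1 (Set.range x)) ∧ ψ (y i) = 0) :
    finrank ℚ (Submodule.span ℚ (insert 1 (Set.range y))) <
      finrank ℚ (Submodule.span ℚ (insert 1 (Set.range x))) := by
  have : FiniteDimensional ℚ (Submodule.span ℚ (insert 1 (Set.range x))) :=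
    FiniteDimensional.span_of_finite ℚ ((Set.finite_range x).insert 1)
  have hker : Submodule.span ℚ (insert 1 (Set.range y)) ≤ LinearMap.ker ψ := by
    rw [Submodule.span_le]
    rintro _ (rfl | ⟨i, rfl⟩)
    exacts [hψ, (hy i).2]
  refine Submodule.finrank_lt_finrank_of_lt (SetLike.lt_iff_le_and_exists.mpr ⟨?_, x i₀, ?_, ?_⟩)
  · rw [Submodule.span_le]
    rintro _ (rfl | ⟨i, rfl⟩)
    exacts [Submodule.subset_span (Set.mem_insert _ _), (hy i).1]
  · exact Submodule.subset_span (Set.mem_insert_of_mem _ ⟨i₀, rfl⟩)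
  · exact fun h => hx (hker h)

/-- Induction on the dimension of the `ℚ`-span of `1` and the coordinates: an irrational
coordinate gives a `ℚ`-linear `ψ` along which `x` moves inside the polyhedron, and the two
rational endpoints of a small move have smaller span. -/
theorem ratPolyhedron_subset_convexHull [Finite κ] (a : κ → ι → ℚ) (b : κ → ℚ) :
    ratPolyhedron a b ⊆ convexHull ℝ (ratPolyhedron a b ∩ ratPoints ι) := by
  intro x hx
  induction hm : finrank ℚ (Submodule.span ℚ (insert 1 (Set.range x))) using Nat.strong_induction_on
    generalizing x with
  | _ m ih =>
  by_cases hrat : ∀ i, x i ∈ Set.range ((↑) : ℚ → ℝ)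
  · choose q hq using hrat
    exact subset_convexHull ℝ _ ⟨hx, q, funext hq⟩
  obtain ⟨i₀, hi₀⟩ : ∃ i, Irrational (x i) := not_forall.mp hrat
  obtain ⟨ψ, hψ1, hψ⟩ := hi₀.exists_linearMap_eq_zero_eq_one
  set D : ι → ℝ := fun i => (ψ (x i) : ℝ)
  set L := AffineMap.lineMap (k := ℝ) x (x + D)
  have hL : ∀ s, L s = x + s • D := fun s => by
    rw [AffineMap.lineMap_apply]
    simp [add_comm]
  have hev : ∀ᶠ t in 𝓝 (x i₀), L (t - x i₀) ∈ ratPolyhedron a b := by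
    have hsub : Tendsto (fun t : ℝ => t - x i₀) (𝓝 (x i₀)) (𝓝 0) :=
      tendsto_sub_nhds_zero_iff.mpr tendsto_id
    refine hsub.eventually (p := fun s => L s ∈ ratPolyhedron a b) ?_
    filter_upwards [eventually_add_smul_mem_ratPolyhedron hx hψ1] with s hs
    rwa [hL]
  have hrank : ∀ t : ℚ,
      finrank ℚ (Submodule.span ℚ (insert 1 (Set.range (L (t - x i₀))))) < m := by
    intro t
    rw [← hm]
    refine finrank_span_insert_one_range_lt (i₀ := i₀) (by simp [hψ]) hψ1 fun i => ?_
    have hLi : L (t - x i₀) i = x i + (t * ψ (x i)) • (1 : ℝ) - ψ (x i) • x i₀ := by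
      simp only [hL, D, Rat.smul_def, Pi.add_apply, Pi.smul_apply, smul_eq_mul]
      push_cast
      ring
    have hxW : ∀ j, x j ∈ Submodule.span ℚ (insert 1 (Set.range x)) := fun j =>
      Submodule.subset_span (Set.mem_insert_of_mem _ ⟨j, rfl⟩)
    rw [hLi, map_sub, map_add, map_smul, map_smul, hψ1, hψ]
    refine ⟨sub_mem (add_mem (hxW i) (Submodule.smul_mem _ _ ?_))
      (Submodule.smul_mem _ _ (hxW i₀)), by simp⟩
    exact Submodule.subset_span (Set.mem_insert _ _)
  obtain ⟨ε, hε, hball⟩ := Metric.eventually_nhds_iff.mp hev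
  obtain ⟨t₁, ht₁, ht₁'⟩ := exists_rat_btwn (show x i₀ - ε < x i₀ by linarith)
  obtain ⟨t₂, ht₂, ht₂'⟩ := exists_rat_btwn (show x i₀ < x i₀ + ε by linarith)
  have hmem : ∀ t : ℚ, |(t : ℝ) - x i₀| < ε →
      L (t - x i₀) ∈ convexHull ℝ (ratPolyhedron a b ∩ ratPoints ι) := fun t ht =>
    ih _ (hrank t) (hball (by rwa [Real.dist_eq])) rfl
  have hseg : x ∈ segment ℝ (L (t₁ - x i₀)) (L (t₂ - x i₀)) := by
    rw [← image_segment, segment_eq_Icc (by linarith)]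
    exact ⟨0, ⟨by linarith, by linarith⟩, by simp [hL]⟩
  exact (convex_convexHull ℝ _).segment_subset
    (hmem t₁ (abs_sub_lt_iff.mpr ⟨by linarith, by linarith⟩))
    (hmem t₂ (abs_sub_lt_iff.mpr ⟨by linarith, by linarith⟩)) hseg

open Classical in
def coverPolyhedron (S : κ → Finset ι) : Set (ι → ℝ) :=
  ratPolyhedron (Sum.elim (fun i => Pi.single i 1) fun j i => if i ∈ S j then 1 else 0)
    (Sum.elim 0 1)

theorem mem_coverPolyhedron {S : κ → Finset ι} {x : ι → ℝ} :
    x ∈ coverPolyhedron S ↔ (∀ i, 0 ≤ x i) ∧ ∀ j, 1 ≤ ∑ i ∈ S j, x i := by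
  classical
  simp [coverPolyhedron, ratPolyhedron, Pi.single_apply, apply_ite (Rat.cast : ℚ → ℝ), ite_mul,
    Finset.sum_ite_mem]

theorem exists_nat_mul_eq_natCast (q : ι → ℚ) (hq : ∀ i, 0 ≤ q i) :
    ∃ D : ℕ, D ≠ 0 ∧ ∃ v : ι → ℕ, ∀ i, (D : ℚ) * q i = v i := by
  classical
  refine ⟨∏ i, (q i).den, Finset.prod_ne_zero_iff.mpr fun i _ => (q i).den_nz,
    fun i => (∏ k ∈ Finset.univ.erase i, (q k).den) * (q i).num.toNat, fun i => ?_⟩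
  have hnum : ((q i).num.toNat : ℚ) = (q i).num := by
    exact_mod_cast Int.toNat_of_nonneg (Rat.num_nonneg.mpr (hq i))
  rw [← Finset.mul_prod_erase _ _ (Finset.mem_univ i)]
  push_cast
  rw [hnum, ← Rat.mul_den_eq_num]
  ring

end RationalPolyhedron

section NewtonPolyhedron

variable {n : ℕ} {κ : Type*} [Finite κ] {I : Ideal (MvPolynomial (Fin n) ℂ)}
  {S : κ → Finset (Fin n)}

theorem inv_smul_natCast_mem_newt_span_X_image {S : Finset (Fin n)} {p : ℕ} (hp : 1 ≤ p)
    {v : Fin n →₀ ℕ} (hv : p ≤ ∑ i ∈ S, v i) :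
    (p : ℝ)⁻¹ • (fun i => (v i : ℝ)) ∈ newt (Ideal.span (X '' (S : Set (Fin n)))) := by
  induction p, hp using Nat.le_induction generalizing v with
  | base =>
    rw [Nat.cast_one, inv_one, one_smul]
    exact subset_convexHull ℝ _
      ⟨v, by simpa using monomial_mem_pow_span_X_image (p := 1) hv (1 : ℂ), rfl⟩
  | succ p hp ih =>
    obtain ⟨i, hiS, w, rfl, hsum⟩ :=
      Finsupp.exists_eq_add_single_of_sum_ne_zero (S := S) (m := v) (by omega)
    have hX : (fun k => ((Finsupp.single i 1 : Fin n →₀ ℕ) k : ℝ)) ∈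
        newt (Ideal.span (X '' (S : Set (Fin n)))) :=
      subset_convexHull ℝ _ ⟨_, Ideal.subset_span ⟨i, hiS, rfl⟩, rfl⟩
    have hcomb : ((p + 1 : ℕ) : ℝ)⁻¹ • (fun k => ((w + Finsupp.single i 1 : Fin n →₀ ℕ) k : ℝ)) =
        (p / (p + 1) : ℝ) • ((p : ℝ)⁻¹ • fun k => (w k : ℝ)) +
          (1 / (p + 1) : ℝ) • fun k => ((Finsupp.single i 1 : Fin n →₀ ℕ) k : ℝ) := by
      funext k
      simp only [Nat.cast_add, Nat.cast_one, Finsupp.coe_add, Pi.add_apply, Pi.smul_apply,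
        smul_eq_mul, one_div]
      field_simp
    rw [hcomb]
    exact convex_convexHull ℝ _ (ih (by omega)) hX (by positivity) (by positivity)
      (by field_simp)

theorem newt_span_X_image_subset (S : Finset (Fin n)) :
    newt (Ideal.span (X '' (S : Set (Fin n)))) ⊆ {x | (∀ i, 0 ≤ x i) ∧ 1 ≤ ∑ i ∈ S, x i} := by
  refine convexHull_min ?_ fun x hx y hy α β hα hβ hαβ => ⟨fun i => ?_, ?_⟩
  · rintro _ ⟨v, hv, rfl⟩
    have hv1 : monomial v (1 : ℂ) ∈ Ideal.span (X '' (S : Set (Fin n))) ^ 1 := by rwa [pow_one]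
    have := mem_pow_span_X_image_iff.mp hv1 v (by simp)
    exact ⟨fun i => Nat.cast_nonneg _, by simpa using (Nat.cast_le (α := ℝ)).mpr this⟩
  · simpa using add_nonneg (mul_nonneg hα (hx.1 i)) (mul_nonneg hβ (hy.1 i))
  · simp only [Pi.add_apply, Pi.smul_apply, smul_eq_mul, Finset.sum_add_distrib,
      ← Finset.mul_sum]
    nlinarith [hx.2, hy.2]

theorem inv_smul_newt_symbolicPower_subset (hI : I.IsRadical)
    (hS : I.minimalPrimes = Set.range fun j => Ideal.span (X '' (S j : Set (Fin n))))
    {p : ℕ} (hp : 1 ≤ p) (j : κ) :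
    (p : ℝ)⁻¹ • newt (symbolicPower I p) ⊆ newt (Ideal.span (X '' (S j : Set (Fin n)))) := by
  rw [newt, ← convexHull_smul]
  refine convexHull_min ?_ (convex_convexHull ℝ _)
  rintro _ ⟨_, ⟨v, hv, rfl⟩, rfl⟩
  exact inv_smul_natCast_mem_newt_span_X_image hp
    ((monomial_mem_symbolicPower_iff hI hS p v).mp hv j)

theorem natCast_smul_newt_symbolicPower_subset (hI : I.IsRadical)
    (hS : I.minimalPrimes = Set.range fun j => Ideal.span (X '' (S j : Set (Fin n))))
    (p q : ℕ) : (q : ℝ) • newt (symbolicPower I p) ⊆ newt (symbolicPower I (q * p)) := by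
  rw [newt, ← convexHull_smul]
  refine convexHull_mono ?_
  rintro _ ⟨_, ⟨v, hv, rfl⟩, rfl⟩
  refine ⟨q • v, (monomial_mem_symbolicPower_iff hI hS _ _).mpr fun j => ?_, ?_⟩
  · simpa [← Finset.mul_sum] using
      Nat.mul_le_mul_left q ((monomial_mem_symbolicPower_iff hI hS p v).mp hv j)
  · funext i
    simp

theorem convex_iUnion_inv_smul_newt_symbolicPower (hI : I.IsRadical)
    (hS : I.minimalPrimes = Set.range fun j => Ideal.span (X '' (S j : Set (Fin n)))) :
    Convex ℝ (⋃ p : ℕ, ⋃ _ : 1 ≤ p, (p : ℝ)⁻¹ • newt (symbolicPower I p)) := by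
  have hmono : ∀ p q : ℕ, 1 ≤ q → (p : ℝ)⁻¹ • newt (symbolicPower I p) ⊆
      ((q * p : ℕ) : ℝ)⁻¹ • newt (symbolicPower I (q * p)) := by
    rintro p q hq _ ⟨y, hy, rfl⟩
    refine ⟨(q : ℝ) • y,
      natCast_smul_newt_symbolicPower_subset hI hS p q (Set.smul_mem_smul_set hy), ?_⟩
    have hq0 : (q : ℝ) ≠ 0 := by positivity
    dsimp only
    rw [smul_smul, Nat.cast_mul, mul_inv, mul_right_comm, inv_mul_cancel₀ hq0, one_mul]
  intro x hx y hy a b ha hb hab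
  simp only [Set.mem_iUnion] at hx hy ⊢
  obtain ⟨p, hp, hx⟩ := hx
  obtain ⟨q, hq, hy⟩ := hy
  have hy' := hmono q p hp hy
  rw [Nat.mul_comm] at hy'
  exact ⟨q * p, Nat.mul_le_mul hq hp,
    (convex_convexHull ℝ _).smul _ (hmono p q hq hx) hy' ha hb hab⟩

theorem coverPolyhedron_inter_ratPoints_subset (hI : I.IsRadical)
    (hS : I.minimalPrimes = Set.range fun j => Ideal.span (X '' (S j : Set (Fin n)))) :
    coverPolyhedron S ∩ ratPoints (Fin n) ⊆
      ⋃ p : ℕ, ⋃ _ : 1 ≤ p, (p : ℝ)⁻¹ • newt (symbolicPower I p) := by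
  rintro _ ⟨hz, q, rfl⟩
  rw [mem_coverPolyhedron] at hz
  obtain ⟨D, hD, v, hv⟩ := exists_nat_mul_eq_natCast q fun i => Rat.cast_nonneg.mp (hz.1 i)
  have hvR : ∀ i, (v i : ℝ) = D * q i := fun i => by exact_mod_cast (hv i).symm
  have hDR : (D : ℝ) ≠ 0 := by exact_mod_cast hD
  refine Set.mem_iUnion₂.mpr ⟨D, Nat.one_le_iff_ne_zero.mpr hD, (D : ℝ) • fun i => (q i : ℝ),
    subset_convexHull ℝ _ ⟨Finsupp.equivFunOnFinite.symm v,
      (monomial_mem_symbolicPower_iff hI hS _ _).mpr fun j => ?_, ?_⟩, ?_⟩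
  · have : (D : ℝ) ≤ ((∑ i ∈ S j, v i : ℕ) : ℝ) := by
      simpa [hvR, ← Finset.mul_sum] using mul_le_mul_of_nonneg_left (hz.2 j) (Nat.cast_nonneg D)
    simpa using Nat.cast_le.mp this
  · funext i
    simp [hvR]
  · simp [smul_smul, hDR]

end NewtonPolyhedron

end ELS

theorem stmt13_general {n r : ℕ} (hr : 1 ≤ r) (I : Ideal (MvPolynomial (Fin n) ℂ))
    (hmonoI : ELS.IsMonomialIdeal I) (hrad : I.IsRadical)
    (C : Fin r → Ideal (MvPolynomial (Fin n) ℂ))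
    (hmin : I.minimalPrimes = Set.range C) :
    (⋃ p : ℕ, ⋃ _ : 1 ≤ p, ((p : ℝ)⁻¹) • ELS.newt (ELS.symbolicPower I p)) =
      ⋂ i, ELS.newt (C i) := by
  have hCmin : ∀ j, C j ∈ I.minimalPrimes := fun j => hmin ▸ ⟨j, rfl⟩
  obtain ⟨S, hS⟩ : ∃ S : Fin r → Finset (Fin n), ∀ j, C j = span (X '' (S j : Set (Fin n))) := by
    choose S hS using fun j => (Set.toFinite {i | X i ∈ C j}).exists_finset_coe
    exact ⟨S, fun j => (hS j).symm ▸ exists_eq_span_X_image_of_mem_minimalPrimes hmonoI (hCmin j)⟩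
  have hminS : I.minimalPrimes = Set.range fun j => span (X '' (S j : Set (Fin n))) := by
    rw [hmin, funext hS]
  refine Set.Subset.antisymm (Set.iUnion₂_subset fun p hp => Set.subset_iInter fun j => ?_) ?_
  · exact hS j ▸ ELS.inv_smul_newt_symbolicPower_subset hrad hminS hp j
  calc ⋂ j, ELS.newt (C j) ⊆ ELS.coverPolyhedron S := fun x hx => by
        have hx' := fun j => ELS.newt_span_X_image_subset (S j) (hS j ▸ Set.mem_iInter.mp hx j)
        exact ELS.mem_coverPolyhedron.mpr ⟨(hx' ⟨0, hr⟩).1, fun j => (hx' j).2⟩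
    _ ⊆ convexHull ℝ (ELS.coverPolyhedron S ∩ ELS.ratPoints (Fin n)) :=
        ELS.ratPolyhedron_subset_convexHull _ _
    _ ⊆ _ := convexHull_min (ELS.coverPolyhedron_inter_ratPoints_subset hrad hminS)
        (ELS.convex_iUnion_inv_smul_newt_symbolicPower hrad hminS)

/-- for a nonzero squarefree (radical) monomial ideal `I` with minimal primes
`C_1, …, C_r`, `⋃_{p≥1} (1/p)·Newt(I^{(p)}) = Newt(C_1) ∩ … ∩ Newt(C_r)`. -/
theorem stmt13 {n r : ℕ} (hr : 1 ≤ r) (I : Ideal (MvPolynomial (Fin n) ℂ)) (hI0 : I ≠ ⊥)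
    (hmonoI : ELS.IsMonomialIdeal I) (hrad : I.IsRadical)
    (C : Fin r → Ideal (MvPolynomial (Fin n) ℂ))
    (hmin : I.minimalPrimes = Set.range C) :
    (⋃ p : ℕ, ⋃ _ : 1 ≤ p, ((p : ℝ)⁻¹) • ELS.newt (ELS.symbolicPower I p)) =
      ⋂ i, ELS.newt (C i) :=
  stmt13_general hr I hmonoI hrad C hmin
end

section
/- Let I = (xy, xz, yz) ⊆ ℂ[x,y,z]. For every integer r ≥ 1 and all a, b, c ∈ ℕ, the monomial x^a y^b z^c belongs to the ordinary power I^r if and only if a+b ≥ r, a+c ≥ r, b+c ≥ r, and a+b+c ≥ 2r. -/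
open Ideal MvPolynomial Pointwise

/-!
Every product of `r` of the generators `xy, xz, yz` has its exponent vector in `r · NP(I)`, the
region cut out by the four inequalities; this region grows additively in `r` and is closed
upwards, so a monomial of `I^r`, being divisible by such a product, satisfies the inequalities.
Conversely, under the inequalities `x^a y^b z^c` is divisible by some `(xy)^i (xz)^j (yz)^k` with
`i + j + k = r`.
-/

namespace TriangleIdeal

open Finsupp

variable {R : Type*} [CommSemiring R]

variable (R) in
noncomputable def triangleIdeal : Ideal (MvPolynomial (Fin 3) R) :=
  Ideal.span {X 0 * X 1, X 0 * X 2, X 1 * X 2}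

/-- The lattice points of `r` times the Newton polyhedron of `triangleIdeal`. -/
def newtonLattice (r : ℕ) : Set (Fin 3 →₀ ℕ) :=
  {v | r ≤ v 0 + v 1 ∧ r ≤ v 0 + v 2 ∧ r ≤ v 1 + v 2 ∧ 2 * r ≤ v 0 + v 1 + v 2}

lemma add_mem_newtonLattice {r s : ℕ} {u v : Fin 3 →₀ ℕ} (hu : u ∈ newtonLattice r)
    (hv : v ∈ newtonLattice s) : u + v ∈ newtonLattice (r + s) := by
  obtain ⟨hu₁, hu₂, hu₃, hu₄⟩ := hu
  obtain ⟨hv₁, hv₂, hv₃, hv₄⟩ := hv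
  simp only [newtonLattice, Set.mem_ofPred_eq, Finsupp.add_apply]
  omega

lemma newtonLattice_mono {r : ℕ} {u v : Fin 3 →₀ ℕ} (huv : u ≤ v) (hu : u ∈ newtonLattice r) :
    v ∈ newtonLattice r := by
  obtain ⟨h₁, h₂, h₃, h₄⟩ := hu
  have := huv 0; have := huv 1; have := huv 2
  refine ⟨?_, ?_, ?_, ?_⟩ <;> omega

lemma single_add_single_mem_newtonLattice {i j : Fin 3} (hij : i ≠ j) :
    single i 1 + single j 1 ∈ newtonLattice 1 := by
  fin_cases i <;> fin_cases j <;> simp_all [newtonLattice]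

lemma triangleIdeal_pow_le_span_newtonLattice (r : ℕ) :
    triangleIdeal R ^ r ≤ Ideal.span ((fun v => monomial v (1 : R)) '' newtonLattice r) := by
  induction r with
  | zero =>
    rw [pow_zero, Ideal.one_eq_top, top_le_iff, Ideal.eq_top_iff_one, one_def]
    exact Ideal.subset_span ⟨0, by simp [newtonLattice], rfl⟩
  | succ r ih =>
    have hgen : triangleIdeal R ≤
        Ideal.span ((fun v => monomial v (1 : R)) '' newtonLattice 1) := by
      have hX : ∀ {i j : Fin 3}, i ≠ j →
          (X i * X j : MvPolynomial (Fin 3) R) ∈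
            Ideal.span ((fun v => monomial v (1 : R)) '' newtonLattice 1) := fun hij =>
        Ideal.subset_span ⟨_, single_add_single_mem_newtonLattice hij, by
          simp only [X, monomial_mul, one_mul]⟩
      rw [triangleIdeal, Ideal.span_le]
      rintro p (rfl | rfl | rfl) <;> exact hX (by decide)
    rw [pow_succ]
    refine (Ideal.mul_mono ih hgen).trans ?_
    rw [Ideal.span_mul_span']
    refine Ideal.span_mono ?_
    rintro _ ⟨_, ⟨u, hu, rfl⟩, _, ⟨v, hv, rfl⟩, rfl⟩
    exact ⟨u + v, add_mem_newtonLattice hu hv, by simp [monomial_mul]⟩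

lemma mem_newtonLattice_of_monomial_mem [Nontrivial R] {r : ℕ} {v : Fin 3 →₀ ℕ}
    (hv : monomial v (1 : R) ∈ triangleIdeal R ^ r) : v ∈ newtonLattice r := by
  have hspan := triangleIdeal_pow_le_span_newtonLattice r hv
  rw [mem_ideal_span_monomial_image] at hspan
  obtain ⟨u, hu, huv⟩ := hspan v (by simp)
  exact newtonLattice_mono huv hu

lemma X_pow_mul_X_pow_mul_X_pow (a b c : ℕ) :
    (X 0 : MvPolynomial (Fin 3) R) ^ a * X 1 ^ b * X 2 ^ c =
      monomial (single 0 a + single 1 b + single 2 c) 1 := by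
  simp only [X_pow_eq_monomial, monomial_mul, one_mul]

lemma le_of_X_pow_mul_mem_triangleIdeal_pow [Nontrivial R] {r a b c : ℕ}
    (h : (X 0 : MvPolynomial (Fin 3) R) ^ a * X 1 ^ b * X 2 ^ c ∈ triangleIdeal R ^ r) :
    r ≤ a + b ∧ r ≤ a + c ∧ r ≤ b + c ∧ 2 * r ≤ a + b + c := by
  rw [X_pow_mul_X_pow_mul_X_pow] at h
  simpa [newtonLattice] using mem_newtonLattice_of_monomial_mem h

/-- `i, j, k` count the factors `xy, xz, yz`: take as few `xz, yz` as the exponents of `y, x`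
force, and fill up with `xy`. -/
lemma exists_triangle_decomposition {r a b c : ℕ} (hab : r ≤ a + b) (hac : r ≤ a + c)
    (hbc : r ≤ b + c) (habc : 2 * r ≤ a + b + c) :
    ∃ i j k : ℕ, i + j + k = r ∧ i + j ≤ a ∧ i + k ≤ b ∧ j + k ≤ c :=
  ⟨r - (r - b) - (r - a), r - b, r - a, by omega, by omega, by omega, by omega⟩

lemma X_pow_mul_mem_triangleIdeal_pow {r a b c : ℕ} (hab : r ≤ a + b) (hac : r ≤ a + c)
    (hbc : r ≤ b + c) (habc : 2 * r ≤ a + b + c) :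
    (X 0 : MvPolynomial (Fin 3) R) ^ a * X 1 ^ b * X 2 ^ c ∈ triangleIdeal R ^ r := by
  obtain ⟨i, j, k, rfl, hij, hik, hjk⟩ := exists_triangle_decomposition hab hac hbc habc
  obtain ⟨a', rfl⟩ := Nat.exists_eq_add_of_le hij
  obtain ⟨b', rfl⟩ := Nat.exists_eq_add_of_le hik
  obtain ⟨c', rfl⟩ := Nat.exists_eq_add_of_le hjk
  have hfactor : (X 0 : MvPolynomial (Fin 3) R) ^ (i + j + a') * X 1 ^ (i + k + b') *
      X 2 ^ (j + k + c') = (X 0 * X 1) ^ i * (X 0 * X 2) ^ j * (X 1 * X 2) ^ k *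
        (X 0 ^ a' * X 1 ^ b' * X 2 ^ c') := by ring
  have hgen : ∀ p ∈ ({X 0 * X 1, X 0 * X 2, X 1 * X 2} : Set (MvPolynomial (Fin 3) R)),
      p ∈ triangleIdeal R := fun _ hp => Ideal.subset_span hp
  rw [hfactor, pow_add, pow_add]
  refine Ideal.mul_mem_right _ _ (Ideal.mul_mem_mul (Ideal.mul_mem_mul ?_ ?_) ?_) <;>
    exact Ideal.pow_mem_pow (hgen _ (by simp)) _

end TriangleIdeal

open MvPolynomial in
theorem stmt16_general (r : ℕ) (a b c : ℕ) :
    (X 0 : MvPolynomial (Fin 3) ℂ) ^ a * X 1 ^ b * X 2 ^ c ∈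
        (Ideal.span {X 0 * X 1, X 0 * X 2, X 1 * X 2} : Ideal (MvPolynomial (Fin 3) ℂ)) ^ r ↔
      r ≤ a + b ∧ r ≤ a + c ∧ r ≤ b + c ∧ 2 * r ≤ a + b + c :=
  ⟨TriangleIdeal.le_of_X_pow_mul_mem_triangleIdeal_pow, fun ⟨hab, hac, hbc, habc⟩ =>
    TriangleIdeal.X_pow_mul_mem_triangleIdeal_pow hab hac hbc habc⟩

open MvPolynomial in
/-- for `I = (xy, xz, yz) ⊆ ℂ[x,y,z]` and `r ≥ 1`,
`x^a y^b z^c ∈ I^r` iff `a+b ≥ r`, `a+c ≥ r`, `b+c ≥ r`, and `a+b+c ≥ 2r`. -/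
theorem stmt16 (r : ℕ) (hr : 1 ≤ r) (a b c : ℕ) :
    (X 0 : MvPolynomial (Fin 3) ℂ) ^ a * X 1 ^ b * X 2 ^ c ∈
        (Ideal.span {X 0 * X 1, X 0 * X 2, X 1 * X 2} : Ideal (MvPolynomial (Fin 3) ℂ)) ^ r ↔
      r ≤ a + b ∧ r ≤ a + c ∧ r ≤ b + c ∧ 2 * r ≤ a + b + c :=
  stmt16_general r a b c
end

section
/- Let I = (xy, xz, yz) ⊆ ℂ[x,y,z]. For every integer r ≥ 1 and every integer m ≥ 2r-1, the symbolic power is contained in the ordinary power: I^{(m)} ⊆ I^r. In particular I^{(3)} ⊆ I^2. -/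
open Ideal MvPolynomial Pointwise

namespace Stmt19Aux

abbrev R3 : Type := MvPolynomial (Fin 3) ℂ

noncomputable abbrev Igen : Ideal R3 := Ideal.span {X 0 * X 1, X 0 * X 2, X 1 * X 2}

lemma supp_span_pair {i j : Fin 3} (hij : i ≠ j) {g : R3}
    (hg : g ∈ Ideal.span {(X i : R3), X j}) : ∀ v ∈ g.support, 1 ≤ v i + v j := by
  have h : ({(X i : R3), X j} : Set R3) = X '' {i, j} := by
    rw [Set.image_pair]
  rw [h] at hg
  intro v hv
  obtain ⟨t, ht, hne⟩ := mem_ideal_span_X_image.mp hg v hv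
  rcases ht with rfl | ht
  · omega
  · simp only [Set.mem_singleton_iff] at ht; subst ht; omega

lemma supp_pow_span_pair {i j : Fin 3} (hij : i ≠ j) (m : ℕ) {g : R3}
    (hg : g ∈ (Ideal.span {(X i : R3), X j}) ^ m) : ∀ v ∈ g.support, m ≤ v i + v j := by
  classical
  induction m generalizing g with
  | zero => intro v hv; omega
  | succ n ih =>
    rw [pow_succ] at hg
    refine Submodule.mul_induction_on hg ?_ ?_
    · intro p hp q hq v hv
      obtain ⟨a, ha, b, hb, hab⟩ := Finset.mem_add.mp (MvPolynomial.support_mul p q hv)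
      have h1 := ih hp a ha
      have h2 := supp_span_pair hij hq b hb
      have : v i = a i + b i ∧ v j = a j + b j := by
        constructor <;> · rw [← hab]; simp
      omega
    · intro x y hx hy v hv
      rcases Finset.mem_union.mp (MvPolynomial.support_add hv) with h | h
      · exact hx v h
      · exact hy v h

lemma exists_wt_zero {i j : Fin 3} {s : R3}
    (hs : s ∉ Ideal.span {(X i : R3), X j}) : ∃ w ∈ s.support, w i = 0 ∧ w j = 0 := by
  by_contra h
  push_neg at h
  apply hs
  have himg : ({(X i : R3), X j} : Set R3) = X '' {i, j} := by rw [Set.image_pair]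
  rw [himg]
  refine mem_ideal_span_X_image.mpr fun w hw => ?_
  rcases Nat.eq_zero_or_pos (w i) with h0 | h0
  · exact ⟨j, by simp, fun hj => (h w hw h0 hj)⟩
  · exact ⟨i, by simp, by omega⟩

/-- Substitution killing `X i` and `X j`. -/
noncomputable def proj (i j : Fin 3) : R3 →ₐ[ℂ] R3 :=
  aeval (fun t => if t = i ∨ t = j then 0 else X t)

lemma sub_proj_mem (i j : Fin 3) (f : R3) : f - proj i j f ∈ Ideal.span {(X i : R3), X j} := by
  induction f using MvPolynomial.induction_on with
  | C a => simp [proj]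
  | add p q hp hq =>
    have : p + q - proj i j (p + q) = (p - proj i j p) + (q - proj i j q) := by
      rw [map_add]; ring
    rw [this]; exact Ideal.add_mem _ hp hq
  | mul_X p t hp =>
    have hXt : (X t : R3) - proj i j (X t) ∈ Ideal.span {(X i : R3), X j} := by
      by_cases ht : t = i ∨ t = j
      · have : proj i j (X t) = 0 := by simp [proj, ht]
        rw [this, sub_zero]
        rcases ht with rfl | rfl
        · exact Ideal.subset_span (by simp)
        · exact Ideal.subset_span (by simp)
      · have : proj i j (X t) = X t := by simp [proj, ht]
        rw [this, sub_self]; exact Ideal.zero_mem _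
    have : p * X t - proj i j (p * X t) =
        (p - proj i j p) * X t + proj i j p * (X t - proj i j (X t)) := by
      rw [_root_.map_mul]; ring
    rw [this]
    exact Ideal.add_mem _ (Ideal.mul_mem_right _ _ hp) (Ideal.mul_mem_left _ _ hXt)

lemma span_pair_eq_ker (i j : Fin 3) :
    Ideal.span {(X i : R3), X j} = RingHom.ker (proj i j) := by
  apply le_antisymm
  · rw [Ideal.span_le]
    rintro x hx
    rcases hx with rfl | hx
    · show proj i j (X i) = 0; simp [proj]
    · simp only [Set.mem_singleton_iff] at hx; subst hx
      show proj i j (X j) = 0; simp [proj]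
  · intro f hf
    have h0 : proj i j f = 0 := hf
    have := sub_proj_mem i j f
    rwa [h0, sub_zero] at this

lemma isPrime_span_pair (i j : Fin 3) : (Ideal.span {(X i : R3), X j}).IsPrime := by
  rw [span_pair_eq_ker]
  exact RingHom.ker_isPrime _

lemma X_notMem_span_pair {i j k : Fin 3} (hki : k ≠ i) (hkj : k ≠ j) :
    (X k : R3) ∉ Ideal.span {(X i : R3), X j} := by
  rw [span_pair_eq_ker]
  intro h
  have h0 : proj i j (X k) = 0 := h
  have h1 : proj i j (X k) = X k := by simp [proj, hki, hkj]
  rw [h1] at h0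
  exact MvPolynomial.X_ne_zero k h0

lemma span_pair_mem_minimalPrimes (i j k : Fin 3) (hki : k ≠ i) (hkj : k ≠ j)
    (hle : Igen ≤ Ideal.span {(X i : R3), X j})
    (h2 : (X i : R3) * X k ∈ Igen) (h3 : (X j : R3) * X k ∈ Igen) :
    Ideal.span {(X i : R3), X j} ∈ Igen.minimalPrimes := by
  constructor
  · exact ⟨isPrime_span_pair i j, hle⟩
  · rintro Q ⟨hQp, hIQ⟩ hQle
    have hk : (X k : R3) ∉ Q := fun h => X_notMem_span_pair hki hkj (hQle h)
    have hXi : (X i : R3) ∈ Q := (hQp.mem_or_mem (hIQ h2)).resolve_right hk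
    have hXj : (X j : R3) ∈ Q := (hQp.mem_or_mem (hIQ h3)).resolve_right hk
    rw [Ideal.span_le]
    rintro x hx
    rcases hx with rfl | hx
    · exact hXi
    · simp only [Set.mem_singleton_iff] at hx; subst hx; exact hXj


section Comp

open Classical in
/-- The part of `f` of weighted degree `k` with respect to the weight `e_i + e_j`. -/
noncomputable def comp (i j : Fin 3) (k : ℕ) (f : R3) : R3 :=
  ∑ v ∈ f.support.filter (fun v => v i + v j = k), monomial v (coeff v f)

lemma coeff_comp (i j : Fin 3) (k : ℕ) (f : R3) (u : Fin 3 →₀ ℕ) :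
    coeff u (comp i j k f) = if u i + u j = k then coeff u f else 0 := by
  classical
  rw [comp, coeff_sum]
  simp only [coeff_monomial]
  rw [Finset.sum_ite_eq' (f.support.filter (fun v => v i + v j = k)) u (fun v => coeff v f)]
  by_cases h : u i + u j = k
  · by_cases h0 : coeff u f = 0
    · simp [h, h0]
    · simp [h, Finset.mem_filter, mem_support_iff, h0]
  · simp [h, Finset.mem_filter]

lemma supp_comp {i j : Fin 3} {k : ℕ} {f : R3} :
    ∀ v ∈ (comp i j k f).support, v i + v j = k := by
  intro v hv
  have := mem_support_iff.mp hv
  rw [coeff_comp] at this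
  by_contra h
  rw [if_neg h] at this
  exact this rfl

lemma primary (i j : Fin 3) (hij : i ≠ j) (m : ℕ) {s f : R3}
    (hs : s ∉ Ideal.span {(X i : R3), X j})
    (hsf : s * f ∈ (Ideal.span {(X i : R3), X j}) ^ m) :
    ∀ v ∈ f.support, m ≤ v i + v j := by
  classical
  by_contra h
  push_neg at h
  obtain ⟨v0, hv0, hv0lt⟩ := h
  set T := f.support.image (fun v => v i + v j) with hT
  have hTne : T.Nonempty := ⟨_, Finset.mem_image_of_mem _ hv0⟩
  set k := T.min' hTne with hk
  have hk_le : ∀ v ∈ f.support, k ≤ v i + v j := fun v hv =>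
    Finset.min'_le _ _ (Finset.mem_image_of_mem _ hv)
  have hklt : k < m := lt_of_le_of_lt (hk_le v0 hv0) hv0lt
  obtain ⟨vk, hvk, hvkeq⟩ := Finset.mem_image.mp (T.min'_mem hTne)
  obtain ⟨w, hw, hwi, hwj⟩ := exists_wt_zero hs
  -- the two components are nonzero
  have hs0 : comp i j 0 s ≠ 0 := by
    rw [MvPolynomial.ne_zero_iff]
    exact ⟨w, by rw [coeff_comp, hwi, hwj, if_pos rfl]; exact mem_support_iff.mp hw⟩
  have hfk : comp i j k f ≠ 0 := by
    rw [MvPolynomial.ne_zero_iff]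
    exact ⟨vk, by rw [coeff_comp, hvkeq, if_pos rfl]; exact mem_support_iff.mp hvk⟩
  have hprod : comp i j 0 s * comp i j k f ≠ 0 := mul_ne_zero hs0 hfk
  obtain ⟨u, hu⟩ := MvPolynomial.support_nonempty.mpr hprod
  obtain ⟨a, ha, b, hb, hab⟩ := Finset.mem_add.mp (MvPolynomial.support_mul _ _ hu)
  have hai : a i + a j = 0 := supp_comp a ha
  have hbk : b i + b j = k := supp_comp b hb
  have huk : u i + u j = k := by
    have h1 : u i = a i + b i := by rw [← hab]; simp
    have h2 : u j = a j + b j := by rw [← hab]; simp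
    omega
  -- coefficient of u in s * f agrees with that in the product of components
  have hcoeff : coeff u (s * f) = coeff u (comp i j 0 s * comp i j k f) := by
    rw [coeff_mul, coeff_mul]
    apply Finset.sum_congr rfl
    rintro ⟨c, d⟩ hcd
    have hcd' : c + d = u := Finset.HasAntidiagonal.mem_antidiagonal.mp hcd
    have h1 : c i + d i = u i := by rw [← hcd']; simp
    have h2 : c j + d j = u j := by rw [← hcd']; simp
    simp only []
    by_cases hc : c i + c j = 0
    · have hd : d i + d j = k := by omega
      rw [coeff_comp, coeff_comp, if_pos hc, if_pos hd]
    · have hd : d i + d j < k := by omega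
      have hdf : coeff d f = 0 := by
        by_contra hne
        exact absurd (hk_le d (mem_support_iff.mpr hne)) (by omega)
      rw [hdf, coeff_comp, if_neg hc, mul_zero, zero_mul]
  have hune : coeff u (s * f) ≠ 0 := by rw [hcoeff]; exact mem_support_iff.mp hu
  have := supp_pow_span_pair hij m hsf u (mem_support_iff.mpr hune)
  omega

end Comp


lemma step_pow (p q : Fin 3) (hpq : p ≠ q) (hgen : (X p : R3) * X q ∈ Igen) (v : Fin 3 →₀ ℕ)
    (hp : 1 ≤ v p) (hq : 1 ≤ v q) (n : ℕ)
    (ih : (monomial (v - Finsupp.single p 1 - Finsupp.single q 1) (1 : ℂ) : R3) ∈ Igen ^ n) :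
    (monomial v (1 : ℂ) : R3) ∈ Igen ^ (n + 1) := by
  set v' := v - Finsupp.single p 1 - Finsupp.single q 1 with hv'
  have hvv : v' + (Finsupp.single p 1 + Finsupp.single q 1) = v := by
    ext t
    simp only [hv', Finsupp.add_apply, Finsupp.tsub_apply, Finsupp.single_apply]
    by_cases h1 : p = t <;> by_cases h2 : q = t
    · exact absurd (h1.trans h2.symm) hpq
    · subst h1; rw [if_pos rfl, if_neg h2]; omega
    · subst h2; rw [if_neg h1, if_pos rfl]; omega
    · rw [if_neg h1, if_neg h2]; omega
  have key : (monomial v (1 : ℂ) : R3) = monomial v' 1 * (X p * X q) := by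
    rw [X, X, monomial_mul, monomial_mul, ← hvv]
    norm_num
  rw [key, pow_succ]
  exact Submodule.mul_mem_mul ih hgen

lemma monomial_mem_pow (r : ℕ) (v : Fin 3 →₀ ℕ)
    (h01 : 2 * r ≤ v 0 + v 1 + 1) (h02 : 2 * r ≤ v 0 + v 2 + 1) (h12 : 2 * r ≤ v 1 + v 2 + 1) :
    (monomial v (1 : ℂ) : R3) ∈ Igen ^ r := by
  induction r generalizing v with
  | zero => simp
  | succ n ih =>
    by_cases h0 : v 0 = 0
    · refine step_pow 1 2 (by decide) (Ideal.subset_span (by simp)) v (by omega) (by omega) n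
        (ih _ ?_ ?_ ?_) <;>
        simp only [Finsupp.tsub_apply, Finsupp.single_apply] <;>
        norm_num [Fin.ext_iff] <;> omega
    · by_cases h1 : v 1 = 0
      · refine step_pow 0 2 (by decide) (Ideal.subset_span (by simp)) v (by omega) (by omega) n
          (ih _ ?_ ?_ ?_) <;>
          simp only [Finsupp.tsub_apply, Finsupp.single_apply] <;>
          norm_num [Fin.ext_iff] <;> omega
      · refine step_pow 0 1 (by decide) (Ideal.subset_span (by simp)) v (by omega) (by omega) n
          (ih _ ?_ ?_ ?_) <;>
          simp only [Finsupp.tsub_apply, Finsupp.single_apply] <;>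
          norm_num [Fin.ext_iff] <;> omega


lemma Igen_le_span01 : Igen ≤ Ideal.span {(X 0 : R3), X 1} := by
  rw [Ideal.span_le]
  rintro x hx
  simp only [Set.mem_insert_iff, Set.mem_singleton_iff] at hx
  rcases hx with rfl | rfl | rfl
  · exact Ideal.mul_mem_right _ _ (Ideal.subset_span (by simp))
  · exact Ideal.mul_mem_right _ _ (Ideal.subset_span (by simp))
  · exact Ideal.mul_mem_right _ _ (Ideal.subset_span (by simp))

lemma Igen_le_span02 : Igen ≤ Ideal.span {(X 0 : R3), X 2} := by
  rw [Ideal.span_le]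
  rintro x hx
  simp only [Set.mem_insert_iff, Set.mem_singleton_iff] at hx
  rcases hx with rfl | rfl | rfl
  · exact Ideal.mul_mem_right _ _ (Ideal.subset_span (by simp))
  · exact Ideal.mul_mem_right _ _ (Ideal.subset_span (by simp))
  · exact Ideal.mul_mem_left _ _ (Ideal.subset_span (by simp))

lemma Igen_le_span12 : Igen ≤ Ideal.span {(X 1 : R3), X 2} := by
  rw [Ideal.span_le]
  rintro x hx
  simp only [Set.mem_insert_iff, Set.mem_singleton_iff] at hx
  rcases hx with rfl | rfl | rfl
  · exact Ideal.mul_mem_left _ _ (Ideal.subset_span (by simp))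
  · exact Ideal.mul_mem_left _ _ (Ideal.subset_span (by simp))
  · exact Ideal.mul_mem_right _ _ (Ideal.subset_span (by simp))

lemma gen_mem (p q : Fin 3) (h : (X p : R3) * X q ∈ ({X 0 * X 1, X 0 * X 2, X 1 * X 2} : Set R3)) :
    (X p : R3) * X q ∈ Igen := Ideal.subset_span h

lemma min01 : Ideal.span {(X 0 : R3), X 1} ∈ Igen.minimalPrimes :=
  span_pair_mem_minimalPrimes 0 1 2 (by decide) (by decide) Igen_le_span01
    (Ideal.subset_span (by simp)) (Ideal.subset_span (by simp))

lemma min02 : Ideal.span {(X 0 : R3), X 2} ∈ Igen.minimalPrimes :=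
  span_pair_mem_minimalPrimes 0 2 1 (by decide) (by decide) Igen_le_span02
    (Ideal.subset_span (by simp))
    (by rw [mul_comm]; exact Ideal.subset_span (by simp))

lemma min12 : Ideal.span {(X 1 : R3), X 2} ∈ Igen.minimalPrimes :=
  span_pair_mem_minimalPrimes 1 2 0 (by decide) (by decide) Igen_le_span12
    (by rw [mul_comm]; exact Ideal.subset_span (by simp))
    (by rw [mul_comm]; exact Ideal.subset_span (by simp))

lemma main (r m : ℕ) (hr : 1 ≤ r) (hm : 2 * r - 1 ≤ m) :
    ELS.symbolicPower Igen m ≤ Igen ^ r := by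
  intro f hf
  -- extract s ∈ outMinPrimes with s * f ∈ Igen ^ m
  have hf' : algebraMap R3 (Localization (ELS.outMinPrimes Igen)) f ∈
      (Igen ^ m).map (algebraMap R3 (Localization (ELS.outMinPrimes Igen))) :=
    Ideal.mem_comap.mp hf
  rw [IsLocalization.mem_map_algebraMap_iff (ELS.outMinPrimes Igen)] at hf'
  obtain ⟨⟨a, t⟩, hat⟩ := hf'
  rw [← _root_.map_mul] at hat
  obtain ⟨c, hc⟩ := (IsLocalization.eq_iff_exists (ELS.outMinPrimes Igen) _).mp hat
  set s : R3 := (c : R3) * (t : R3) with hs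
  have hsS : s ∈ ELS.outMinPrimes Igen := mul_mem c.2 t.2
  have hsf : s * f ∈ Igen ^ m := by
    have heq : s * f = (c : R3) * (a : R3) := by
      rw [hs]; rw [show (c : R3) * (t : R3) * f = (c : R3) * (f * (t : R3)) by ring, hc]
    rw [heq]
    exact Ideal.mul_mem_left _ _ a.2
  -- s avoids all three minimal primes
  have hs01 : s ∉ Ideal.span {(X 0 : R3), X 1} := hsS _ min01
  have hs02 : s ∉ Ideal.span {(X 0 : R3), X 2} := hsS _ min02
  have hs12 : s ∉ Ideal.span {(X 1 : R3), X 2} := hsS _ min12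
  have hb01 := primary 0 1 (by decide) m hs01 (Ideal.pow_right_mono Igen_le_span01 m hsf)
  have hb02 := primary 0 2 (by decide) m hs02 (Ideal.pow_right_mono Igen_le_span02 m hsf)
  have hb12 := primary 1 2 (by decide) m hs12 (Ideal.pow_right_mono Igen_le_span12 m hsf)
  -- conclude
  rw [f.as_sum]
  refine Ideal.sum_mem _ fun v hv => ?_
  have : (monomial v (coeff v f) : R3) = C (coeff v f) * monomial v 1 := by
    rw [C_mul_monomial, mul_one]
  rw [this]
  refine Ideal.mul_mem_left _ _ (monomial_mem_pow r v ?_ ?_ ?_)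
  · have := hb01 v hv; omega
  · have := hb02 v hv; omega
  · have := hb12 v hv; omega

end Stmt19Aux


open MvPolynomial in
/-- for `I = (xy, xz, yz) ⊆ ℂ[x,y,z]`, `I^{(m)} ⊆ I^r` whenever `m ≥ 2r-1`;
in particular `I^{(3)} ⊆ I^2`. -/
theorem stmt19 :
    (∀ r m : ℕ, 1 ≤ r → 2 * r - 1 ≤ m →
      ELS.symbolicPower
          (Ideal.span {X 0 * X 1, X 0 * X 2, X 1 * X 2} : Ideal (MvPolynomial (Fin 3) ℂ)) m ≤
        (Ideal.span {X 0 * X 1, X 0 * X 2, X 1 * X 2} : Ideal (MvPolynomial (Fin 3) ℂ)) ^ r) ∧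
    ELS.symbolicPower
        (Ideal.span {X 0 * X 1, X 0 * X 2, X 1 * X 2} : Ideal (MvPolynomial (Fin 3) ℂ)) 3 ≤
      (Ideal.span {X 0 * X 1, X 0 * X 2, X 1 * X 2} : Ideal (MvPolynomial (Fin 3) ℂ)) ^ 2 :=
  ⟨fun r m hr hm => Stmt19Aux.main r m hr hm,
   Stmt19Aux.main 2 3 (by norm_num) (by norm_num)⟩
end
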